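/- Let (u_k) be iterates of the iteratively regularized Landweber iteration u_{k+1} = u_k − F'(u_k)*(F(u_k) − y^δ) − λ_k·Â'(u_k)*(Â(u_k) − y^δ) with noisy data ‖y^δ − y‖ ≤ δ, y = F(u†). Suppose that for every k with 0 ≤ k < k_*: u_k ∈ B_ρ(u†), the tangential cone condition with constant ν holds at u_k, ‖F'(u_k)‖ ≤ L_F, ‖Â'(u_k)‖ ≤ L_Â, ‖Â(u_k) − y^δ‖ ≤ C_Â^δ, ‖F(u_k) − y^δ‖ ≥ τδ where C_τ = 1 − L_F² − ν − (1+ν)/τ ≥ 0, λ_k·L_Â·C_Â^δ ≤ ρ and λ_k ≤ C_λ^δ·‖F(u_k) − y^δ‖², and that C := C_τ − 2·L_Â·C_Â^δ·C_λ^δ·ρ > 0. Then k_*·(τδ)² ≤ Σ_{k=0}^{k_*−1} ‖F(u_k) − y^δ‖² ≤ ‖u_0 − u†‖² / (2C). -/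

import Mathlib

/-!
With `e = u_k - u†` and `r = F(u_k) - y^δ`, the tangential cone condition and the discrepancy
bound `τδ ≤ ‖r‖` give `⟪F'(u_k) e, r⟫ ≥ (1 - ν - (1 + ν)/τ)‖r‖²`, so a plain Landweber step
decreases `‖e‖²` by at least `(2C_τ + L_F²)‖r‖²` and stays in `B_ρ(u†)`. The regularizing term has
norm at most `λ_k L_Â C_Â^δ`, which is both `≤ ρ` and `≤ L_Â C_Â^δ C_λ^δ ‖r‖²`; it therefore costs
at most `3ρ L_Â C_Â^δ C_λ^δ ‖r‖²`. Summing the resulting decrease `‖e_{k+1}‖² ≤ ‖e_k‖² - 2C‖r_k‖²`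
over `k < k_*` telescopes.
-/

open scoped RealInnerProductSpace

open ContinuousLinearMap Finset

theorem mul_sum_range_le_of_forall_lt_le_sub {a b : ℕ → ℝ} {c : ℝ} {n : ℕ}
    (h : ∀ k < n, a (k + 1) ≤ a k - c * b k) (ha : 0 ≤ a n) :
    c * ∑ k ∈ range n, b k ≤ a 0 := by
  have hterm : ∀ k ∈ range n, c * b k ≤ a k - a (k + 1) := fun k hk ↦ by
    linarith [h k (mem_range.mp hk)]
  calc c * ∑ k ∈ range n, b k = ∑ k ∈ range n, c * b k := mul_sum _ _ _
    _ ≤ ∑ k ∈ range n, (a k - a (k + 1)) := sum_le_sum hterm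
    _ = a 0 - a n := sum_range_sub' a n
    _ ≤ a 0 := by linarith

theorem sq_norm_sub_le_of_norm_le {E : Type*} [SeminormedAddCommGroup E] {p q : E} {ρ : ℝ}
    (hp : ‖p‖ ≤ ρ) (hq : ‖q‖ ≤ ρ) : ‖p - q‖ ^ 2 ≤ ‖p‖ ^ 2 + 3 * ρ * ‖q‖ := by
  have hq0 := norm_nonneg q
  calc ‖p - q‖ ^ 2 ≤ (‖p‖ + ‖q‖) ^ 2 := by gcongr; exact norm_sub_le p q
    _ = ‖p‖ ^ 2 + (2 * ‖p‖ + ‖q‖) * ‖q‖ := by ring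
    _ ≤ ‖p‖ ^ 2 + 3 * ρ * ‖q‖ := by nlinarith

section Landweber

variable {X Y : Type*}
  [NormedAddCommGroup X] [InnerProductSpace ℝ X] [NormedAddCommGroup Y] [InnerProductSpace ℝ Y]

/-- Here `d = y^δ - y` is the data noise, so `r + d = F(u) - F(u†)`. -/
theorem inner_apply_ge_of_tangential_cone (T : X →L[ℝ] Y) (e : X) (r d : Y) {δ ν τ : ℝ}
    (hν : 0 ≤ ν) (hτ : 0 < τ) (hd : ‖d‖ ≤ δ) (hr : τ * δ ≤ ‖r‖)
    (htcc : ‖r + d - T e‖ ≤ ν * ‖r + d‖) :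
    (1 - ν - (1 + ν) / τ) * ‖r‖ ^ 2 ≤ ⟪T e, r⟫ := by
  set w := r + d - T e
  have hr0 := norm_nonneg r
  have hδr : δ * ‖r‖ ≤ ‖r‖ ^ 2 / τ := by
    rw [le_div_iff₀ hτ]; nlinarith [mul_le_mul_of_nonneg_right hr hr0]
  have hsplit : ⟪T e, r⟫ = ‖r‖ ^ 2 + ⟪d, r⟫ - ⟪w, r⟫ := by
    rw [show T e = r + d - w by simp only [w]; abel, inner_sub_left, inner_add_left,
      real_inner_self_eq_norm_sq]
  have hdr : -(δ * ‖r‖) ≤ ⟪d, r⟫ := by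
    linarith [neg_abs_le ⟪d, r⟫, abs_real_inner_le_norm d r, mul_le_mul_of_nonneg_right hd hr0]
  have hwr : ⟪w, r⟫ ≤ ν * (‖r‖ + δ) * ‖r‖ := by
    have hw : ‖w‖ ≤ ν * (‖r‖ + δ) :=
      htcc.trans (mul_le_mul_of_nonneg_left ((norm_add_le r d).trans (by linarith)) hν)
    linarith [real_inner_le_norm w r, mul_le_mul_of_nonneg_right hw hr0]
  have hνδr : ν * (δ * ‖r‖) ≤ ν * (‖r‖ ^ 2 / τ) := mul_le_mul_of_nonneg_left hδr hν
  have hexpand : (1 + ν) / τ * ‖r‖ ^ 2 = ‖r‖ ^ 2 / τ + ν * (‖r‖ ^ 2 / τ) := by ring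
  rw [hsplit]
  linarith

variable [CompleteSpace X] [CompleteSpace Y]

theorem norm_adjoint_apply_le (T : X →L[ℝ] Y) (r : Y) : ‖adjoint T r‖ ≤ ‖T‖ * ‖r‖ := by
  simpa only [LinearIsometryEquiv.norm_map] using (adjoint T).le_opNorm r

theorem sq_norm_sub_adjoint_apply_le (T : X →L[ℝ] Y) (e : X) (r : Y) {c L : ℝ}
    (hT : ‖T‖ ≤ L) (hc : c * ‖r‖ ^ 2 ≤ ⟪T e, r⟫) :
    ‖e - adjoint T r‖ ^ 2 ≤ ‖e‖ ^ 2 - (2 * c - L ^ 2) * ‖r‖ ^ 2 := by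
  have hTr : ‖adjoint T r‖ ^ 2 ≤ L ^ 2 * ‖r‖ ^ 2 := by
    rw [← mul_pow]
    exact pow_le_pow_left₀ (norm_nonneg _)
      ((norm_adjoint_apply_le T r).trans (by gcongr)) 2
  rw [norm_sub_sq_real, adjoint_inner_right]
  linarith

theorem norm_smul_adjoint_apply_le (S : X →L[ℝ] Y) (a : Y) {lam LA CA : ℝ}
    (hlam : 0 ≤ lam) (hS : ‖S‖ ≤ LA) (ha : ‖a‖ ≤ CA) :
    ‖lam • adjoint S a‖ ≤ lam * LA * CA := by
  rw [norm_smul, Real.norm_of_nonneg hlam, mul_assoc]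
  exact mul_le_mul_of_nonneg_left
    ((norm_adjoint_apply_le S a).trans (mul_le_mul hS ha (norm_nonneg a)
      ((norm_nonneg S).trans hS))) hlam

/-- One step of the iteratively regularized Landweber iteration, written for the error
`e = u_k - u†`, the residual `r = F(u_k) - y^δ`, `a = Â(u_k) - y^δ` and the noise `d = y^δ - y`. -/
theorem sq_norm_irLandweber_step_le (T S : X →L[ℝ] Y) (e : X) (r a d : Y)
    {δ ρ LF LA ν τ CA Clam lam : ℝ} (hν : 0 ≤ ν) (hτ : 0 < τ) (hd : ‖d‖ ≤ δ)
    (hr : τ * δ ≤ ‖r‖) (htcc : ‖r + d - T e‖ ≤ ν * ‖r + d‖)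
    (hT : ‖T‖ ≤ LF) (hS : ‖S‖ ≤ LA) (ha : ‖a‖ ≤ CA) (he : ‖e‖ ≤ ρ)
    (hCτ : 0 ≤ 1 - LF ^ 2 - ν - (1 + ν) / τ)
    (hlam0 : 0 ≤ lam) (hlam1 : lam * LA * CA ≤ ρ) (hlam2 : lam ≤ Clam * ‖r‖ ^ 2) :
    ‖e - adjoint T r - lam • adjoint S a‖ ^ 2
      ≤ ‖e‖ ^ 2 - 2 * ((1 - LF ^ 2 - ν - (1 + ν) / τ) - 2 * LA * CA * Clam * ρ) * ‖r‖ ^ 2 := by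
  set Cτ := 1 - LF ^ 2 - ν - (1 + ν) / τ
  set q := lam • adjoint S a
  have hlandweber : ‖e - adjoint T r‖ ^ 2 ≤ ‖e‖ ^ 2 - (2 * Cτ + LF ^ 2) * ‖r‖ ^ 2 := by
    convert sq_norm_sub_adjoint_apply_le T e r hT
      (inner_apply_ge_of_tangential_cone T e r d hν hτ hd hr htcc) using 3
    ring
  have hLA_CA : 0 ≤ LA * CA := mul_nonneg ((norm_nonneg S).trans hS) ((norm_nonneg a).trans ha)
  have hq : ‖q‖ ≤ lam * LA * CA := norm_smul_adjoint_apply_le S a hlam0 hS ha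
  have hqr : ‖q‖ ≤ LA * CA * Clam * ‖r‖ ^ 2 := by
    linarith [mul_le_mul_of_nonneg_left hlam2 hLA_CA]
  have hstay : ‖e - adjoint T r‖ ≤ ρ := by
    refine (pow_le_pow_iff_left₀ (norm_nonneg _) ((norm_nonneg e).trans he) two_ne_zero).mp ?_
    have hdecay : 0 ≤ (2 * Cτ + LF ^ 2) * ‖r‖ ^ 2 := by positivity
    linarith [pow_le_pow_left₀ (norm_nonneg e) he 2]
  have hρ : 0 ≤ ρ := (norm_nonneg e).trans he
  have hcost : 0 ≤ ρ * (LA * CA * Clam * ‖r‖ ^ 2) := by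
    rw [mul_assoc (LA * CA)]; exact mul_nonneg hρ (mul_nonneg hLA_CA (hlam0.trans hlam2))
  calc ‖e - adjoint T r - q‖ ^ 2 ≤ ‖e - adjoint T r‖ ^ 2 + 3 * ρ * ‖q‖ :=
        sq_norm_sub_le_of_norm_le hstay (hq.trans hlam1)
    _ ≤ ‖e‖ ^ 2 - (2 * Cτ + LF ^ 2) * ‖r‖ ^ 2 + 3 * (ρ * (LA * CA * Clam * ‖r‖ ^ 2)) := by
        rw [mul_assoc]; gcongr
    _ ≤ ‖e‖ ^ 2 - 2 * (Cτ - 2 * LA * CA * Clam * ρ) * ‖r‖ ^ 2 := by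
        linarith [mul_nonneg (sq_nonneg LF) (sq_nonneg ‖r‖)]

end Landweber

theorem stmt5_general
    {X Y : Type*}
    [NormedAddCommGroup X] [InnerProductSpace ℝ X] [CompleteSpace X]
    [NormedAddCommGroup Y] [InnerProductSpace ℝ Y] [CompleteSpace Y]
    (F A : X → Y) (udag : X) (y yδ : Y) (δ ρ LF LA ν τ Cτ CA Clam : ℝ)
    (u : ℕ → X) (lam : ℕ → ℝ) (kstar : ℕ)
    (F' A' : X → X →L[ℝ] Y)
    (hy : y = F udag) (hν : 0 < ν) (hτ : 0 < τ)
    (hnoise : ‖yδ - y‖ ≤ δ)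
    (hiter : ∀ k < kstar,
      u (k + 1) = u k - ContinuousLinearMap.adjoint (F' (u k)) (F (u k) - yδ)
        - lam k • ContinuousLinearMap.adjoint (A' (u k)) (A (u k) - yδ))
    (hball : ∀ k < kstar, u k ∈ Metric.closedBall udag ρ)
    (hLF : ∀ k < kstar, ‖F' (u k)‖ ≤ LF)
    (hLA : ∀ k < kstar, ‖A' (u k)‖ ≤ LA)
    (htcc : ∀ k < kstar,
      ‖F (u k) - F udag - (F' (u k)) (u k - udag)‖ ≤ ν * ‖F (u k) - F udag‖)
    (hAres : ∀ k < kstar, ‖A (u k) - yδ‖ ≤ CA)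
    (hdisc : ∀ k < kstar, τ * δ ≤ ‖F (u k) - yδ‖)
    (hCτ : Cτ = 1 - LF ^ 2 - ν - (1 + ν) / τ) (hCτ0 : 0 ≤ Cτ)
    (hlam0 : ∀ k < kstar, 0 ≤ lam k)
    (hlam1 : ∀ k < kstar, lam k * LA * CA ≤ ρ)
    (hlam2 : ∀ k < kstar, lam k ≤ Clam * ‖F (u k) - yδ‖ ^ 2)
    (hpos : 0 < Cτ - 2 * LA * CA * Clam * ρ) :
    (kstar : ℝ) * (τ * δ) ^ 2 ≤ ∑ k ∈ Finset.range kstar, ‖F (u k) - yδ‖ ^ 2 ∧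
      ∑ k ∈ Finset.range kstar, ‖F (u k) - yδ‖ ^ 2
        ≤ ‖u 0 - udag‖ ^ 2 / (2 * (Cτ - 2 * LA * CA * Clam * ρ)) := by
  have hdecrease : ∀ k < kstar, ‖u (k + 1) - udag‖ ^ 2
      ≤ ‖u k - udag‖ ^ 2 - 2 * (Cτ - 2 * LA * CA * Clam * ρ) * ‖F (u k) - yδ‖ ^ 2 := by
    intro k hk
    have htcc' : ‖(F (u k) - yδ) + (yδ - y) - F' (u k) (u k - udag)‖
        ≤ ν * ‖(F (u k) - yδ) + (yδ - y)‖ := by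
      rw [show F (u k) - yδ + (yδ - y) = F (u k) - F udag by rw [hy]; abel]
      exact htcc k hk
    rw [hiter k hk, sub_right_comm, sub_right_comm (u k), hCτ]
    exact sq_norm_irLandweber_step_le _ _ _ _ _ _ hν.le hτ hnoise (hdisc k hk) htcc'
      (hLF k hk) (hLA k hk) (hAres k hk) (mem_closedBall_iff_norm.mp (hball k hk))
      (hCτ ▸ hCτ0) (hlam0 k hk) (hlam1 k hk) (hlam2 k hk)
  have hτδ : 0 ≤ τ * δ := mul_nonneg hτ.le ((norm_nonneg _).trans hnoise)
  refine ⟨?_, ?_⟩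
  · simpa only [card_range, nsmul_eq_mul] using card_nsmul_le_sum (range kstar)
      (fun k ↦ ‖F (u k) - yδ‖ ^ 2) ((τ * δ) ^ 2)
      fun k hk ↦ pow_le_pow_left₀ hτδ (hdisc k (mem_range.mp hk)) 2
  · rw [le_div_iff₀ (by linarith), mul_comm]
    exact mul_sum_range_le_of_forall_lt_le_sub (a := fun k ↦ ‖u k - udag‖ ^ 2) hdecrease
      (sq_nonneg _)

/-- Corollary 2.5: if the hypotheses of the monotonicity result hold for every iterate
`u_k`, `0 ≤ k < k_*`, of the iteratively regularized Landweber iteration, and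
`C := C_τ − 2·L_Â·C_Â^δ·C_λ^δ·ρ > 0`, then
`k_*·(τδ)² ≤ Σ_{k=0}^{k_*−1} ‖F(u_k) − yδ‖² ≤ ‖u_0 − u†‖²/(2C)`. -/
theorem stmt5
    {X Y : Type*}
    [NormedAddCommGroup X] [InnerProductSpace ℝ X] [CompleteSpace X]
    [NormedAddCommGroup Y] [InnerProductSpace ℝ Y] [CompleteSpace Y]
    (F A : X → Y) (udag : X) (y yδ : Y) (δ ρ LF LA ν τ Cτ CA Clam : ℝ)
    (u : ℕ → X) (lam : ℕ → ℝ) (kstar : ℕ)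
    (F' A' : X → X →L[ℝ] Y)
    (hy : y = F udag) (hρ : 0 < ρ) (hν : 0 < ν) (hτ : 0 < τ)
    (hCA : 0 < CA) (hClam : 0 < Clam)
    (hnoise : ‖yδ - y‖ ≤ δ)
    (hiter : ∀ k < kstar,
      u (k + 1) = u k - ContinuousLinearMap.adjoint (F' (u k)) (F (u k) - yδ)
        - lam k • ContinuousLinearMap.adjoint (A' (u k)) (A (u k) - yδ))
    (hball : ∀ k < kstar, u k ∈ Metric.closedBall udag ρ)
    (hdF : ∀ k < kstar, HasFDerivAt F (F' (u k)) (u k))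
    (hdA : ∀ k < kstar, HasFDerivAt A (A' (u k)) (u k))
    (hLF : ∀ k < kstar, ‖F' (u k)‖ ≤ LF)
    (hLA : ∀ k < kstar, ‖A' (u k)‖ ≤ LA)
    (htcc : ∀ k < kstar,
      ‖F (u k) - F udag - (F' (u k)) (u k - udag)‖ ≤ ν * ‖F (u k) - F udag‖)
    (hAres : ∀ k < kstar, ‖A (u k) - yδ‖ ≤ CA)
    (hdisc : ∀ k < kstar, τ * δ ≤ ‖F (u k) - yδ‖)
    (hCτ : Cτ = 1 - LF ^ 2 - ν - (1 + ν) / τ) (hCτ0 : 0 ≤ Cτ)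
    (hlam0 : ∀ k < kstar, 0 ≤ lam k)
    (hlam1 : ∀ k < kstar, lam k * LA * CA ≤ ρ)
    (hlam2 : ∀ k < kstar, lam k ≤ Clam * ‖F (u k) - yδ‖ ^ 2)
    (hpos : 0 < Cτ - 2 * LA * CA * Clam * ρ) :
    (kstar : ℝ) * (τ * δ) ^ 2 ≤ ∑ k ∈ Finset.range kstar, ‖F (u k) - yδ‖ ^ 2 ∧
      ∑ k ∈ Finset.range kstar, ‖F (u k) - yδ‖ ^ 2
        ≤ ‖u 0 - udag‖ ^ 2 / (2 * (Cτ - 2 * LA * CA * Clam * ρ)) :=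
  stmt5_general F A udag y yδ δ ρ LF LA ν τ Cτ CA Clam u lam kstar F' A' hy hν hτ hnoise hiter hball
    hLF hLA htcc hAres hdisc hCτ hCτ0 hlam0 hlam1 hlam2 hpos
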